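/- Let m ≥ 1, let (a_t, b_t) for 1 ≤ t ≤ m be pairs of positive integers with a_t b_{t+1} − a_{t+1} b_t ≥ 1 for all t, let A_t be positive integers, and let f = ∏_t (y^{a_t} + x^{b_t})^{A_t}. Fix 1 ≤ i < m and suppose (p,q) = α(a_i,b_i) + β(a_{i+1},b_{i+1}) for some positive integers α, β. Then the minimum of p·u + q·v over the support of f equals p·(Σ_{t≤i} b_t A_t) + q·(Σ_{t>i} a_t A_t), and this equals α·m(P_i) + β·m(P_{i+1}) where m(P_j) = a_j Σ_{t≤j} b_t A_t + b_j Σ_{t>j} a_t A_t. -/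

import Mathlib

/-!
The weighted order is additive on products: it agrees with `MvPowerSeries.weightedOrder` on
nonzero polynomials, and there the lowest weighted-homogeneous forms multiply without
cancellation because `ℂ` has no zero divisors. Each factor `y^a + x^b` has weighted order
`min (q a) (p b)`, so the order of `f` is `Σ_t A_t min (q a_t, p b_t)`. The determinant condition
makes `a_t / b_t` decreasing in `t`, and since `(p, q)` is a nonnegative combination of
`(a_i, b_i)` and `(a_{i+1}, b_{i+1})`, the minimum is `p b_t` for `t ≤ i` and `q a_t` for `t > i`.
The second identity is then a regrouping of the sums.
-/

open MvPolynomial Finset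

/-- The weighted order of a polynomial in two variables with respect to
weights `(p, q)`: the minimum of `p * u + q * v` over the support. -/
noncomputable def weightedOrd (p q : ℕ) (f : MvPolynomial (Fin 2) ℂ) : ℕ :=
  sInf {n | ∃ d ∈ f.support, p * d 0 + q * d 1 = n}

section WeightedOrd

variable {p q : ℕ}

theorem weight_pair_apply (d : Fin 2 →₀ ℕ) :
    Finsupp.weight ![p, q] d = p * d 0 + q * d 1 := by
  simp [Finsupp.weight_apply, Finsupp.sum_fintype, Fin.sum_univ_two, mul_comm]

theorem weightedOrd_le {f : MvPolynomial (Fin 2) ℂ} {d : Fin 2 →₀ ℕ}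
    (hd : d ∈ f.support) :
    weightedOrd p q f ≤ p * d 0 + q * d 1 :=
  Nat.sInf_le ⟨d, hd, rfl⟩

theorem exists_mem_support_weightedOrd {f : MvPolynomial (Fin 2) ℂ} (hf : f ≠ 0) :
    ∃ d ∈ f.support, p * d 0 + q * d 1 = weightedOrd p q f := by
  obtain ⟨d, hd⟩ := support_nonempty.mpr hf
  exact Nat.sInf_mem (s := {n | ∃ d ∈ f.support, p * d 0 + q * d 1 = n}) ⟨_, d, hd, rfl⟩

theorem coe_weightedOrd {f : MvPolynomial (Fin 2) ℂ} (hf : f ≠ 0) :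
    (weightedOrd p q f : ℕ∞) =
      MvPowerSeries.weightedOrder ![p, q] (f : MvPowerSeries (Fin 2) ℂ) := by
  obtain ⟨d, hd, hwd⟩ := exists_mem_support_weightedOrd (p := p) (q := q) hf
  refine ((MvPowerSeries.weightedOrder_eq_nat _).mpr ⟨⟨d, ?_, ?_⟩, fun e he ↦ ?_⟩).symm
  · rwa [MvPolynomial.coeff_coe, ← mem_support_iff]
  · rw [weight_pair_apply, hwd]
  · rw [weight_pair_apply] at he
    rw [MvPolynomial.coeff_coe, ← notMem_support_iff]
    exact fun heS ↦ (weightedOrd_le heS).not_gt he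

theorem weightedOrd_prod {ι : Type*} (s : Finset ι) {φ : ι → MvPolynomial (Fin 2) ℂ}
    (hφ : ∀ i ∈ s, φ i ≠ 0) :
    weightedOrd p q (∏ i ∈ s, φ i) = ∑ i ∈ s, weightedOrd p q (φ i) := by
  have h := MvPowerSeries.weightedOrder_prod ![p, q]
    (fun i ↦ (φ i : MvPowerSeries (Fin 2) ℂ)) s
  have hcoe : ((∏ i ∈ s, φ i : MvPolynomial (Fin 2) ℂ) : MvPowerSeries (Fin 2) ℂ) =
      ∏ i ∈ s, (φ i : MvPowerSeries (Fin 2) ℂ) := map_prod coeToMvPowerSeries.ringHom φ s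
  rw [← hcoe, ← coe_weightedOrd (prod_ne_zero_iff.mpr hφ),
    sum_congr rfl fun i hi ↦ (coe_weightedOrd (hφ i hi)).symm] at h
  exact_mod_cast h

theorem weightedOrd_pow {f : MvPolynomial (Fin 2) ℂ} (hf : f ≠ 0) (n : ℕ) :
    weightedOrd p q (f ^ n) = n * weightedOrd p q f := by
  simpa using weightedOrd_prod (p := p) (q := q) (range n) fun _ _ ↦ hf

theorem support_X_pow_add_X_pow {a b : ℕ} (ha : 0 < a) :
    (X 1 ^ a + X 0 ^ b : MvPolynomial (Fin 2) ℂ).support =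
      {Finsupp.single 1 a, Finsupp.single 0 b} := by
  have hdisj : Disjoint (X 1 ^ a : MvPolynomial (Fin 2) ℂ).support
      (X 0 ^ b : MvPolynomial (Fin 2) ℂ).support := by
    rw [support_X_pow, support_X_pow, disjoint_singleton]
    intro h
    simpa [ha.ne'] using DFunLike.congr_fun h 1
  rw [support, AddMonoidAlgebra.coeff_add, Finsupp.support_add_eq hdisj]
  exact congrArg₂ (· ∪ ·) (support_X_pow 1 a) (support_X_pow 0 b)

theorem X_pow_add_X_pow_ne_zero {a b : ℕ} (ha : 0 < a) :
    (X 1 ^ a + X 0 ^ b : MvPolynomial (Fin 2) ℂ) ≠ 0 := by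
  rw [← support_nonempty, support_X_pow_add_X_pow ha]
  exact insert_nonempty _ _

theorem weightedOrd_X_pow_add_X_pow {a b : ℕ} (ha : 0 < a) :
    weightedOrd p q (X 1 ^ a + X 0 ^ b : MvPolynomial (Fin 2) ℂ) = min (q * a) (p * b) := by
  have hsupp := support_X_pow_add_X_pow (b := b) ha
  refine le_antisymm (le_min ?_ ?_) ?_
  · simpa using weightedOrd_le (p := p) (q := q) (d := Finsupp.single 1 a) (by simp [hsupp])
  · simpa using weightedOrd_le (p := p) (q := q) (d := Finsupp.single 0 b) (by simp [hsupp])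
  · obtain ⟨d, hd, hwd⟩ :=
      exists_mem_support_weightedOrd (p := p) (q := q) (X_pow_add_X_pow_ne_zero ha)
    rw [hsupp, mem_insert, mem_singleton] at hd
    rcases hd with rfl | rfl
    · simp [← hwd]
    · simp [← hwd]

theorem weightedOrd_prod_X_pow_add_X_pow_pow {ι : Type*} {s : Finset ι} {a b A : ι → ℕ}
    (ha : ∀ t ∈ s, 0 < a t) :
    weightedOrd p q (∏ t ∈ s, (X 1 ^ a t + X 0 ^ b t : MvPolynomial (Fin 2) ℂ) ^ A t) =
      ∑ t ∈ s, A t * min (q * a t) (p * b t) := by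
  rw [weightedOrd_prod s fun t ht ↦ pow_ne_zero _ (X_pow_add_X_pow_ne_zero (ha t ht))]
  refine sum_congr rfl fun t ht ↦ ?_
  rw [weightedOrd_pow (X_pow_add_X_pow_ne_zero (ha t ht)), weightedOrd_X_pow_add_X_pow (ha t ht)]

end WeightedOrd

/-- `a t / b t` is antitone on `[1, m]` if it decreases at each step, cross-multiplied. -/
theorem cross_mul_le_of_succ {a b : ℕ → ℕ} {m : ℕ}
    (hb : ∀ t, 1 ≤ t → t ≤ m → 0 < b t)
    (hstep : ∀ t, 1 ≤ t → t < m → a (t + 1) * b t ≤ a t * b (t + 1))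
    ⦃s t : ℕ⦄ (hs : 1 ≤ s) (hst : s ≤ t) (htm : t ≤ m) : a t * b s ≤ a s * b t := by
  induction t, hst using Nat.le_induction with
  | base => exact le_rfl
  | succ t hst ih =>
    have hbt : 0 < b t := hb t (hs.trans hst) (by omega)
    refine Nat.le_of_mul_le_mul_right ?_ hbt
    calc a (t + 1) * b s * b t = a (t + 1) * b t * b s := by ring
      _ ≤ a t * b (t + 1) * b s := Nat.mul_le_mul_right _ (hstep t (hs.trans hst) htm)
      _ = a t * b s * b (t + 1) := by ring
      _ ≤ a s * b t * b (t + 1) := Nat.mul_le_mul_right _ (ih (by omega))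
      _ = a s * b (t + 1) * b t := by ring

theorem stmt11_general (m : ℕ) (a b A : ℕ → ℕ)
    (hpos : ∀ t, 1 ≤ t → t ≤ m → 0 < a t ∧ 0 < b t)
    (hdet : ∀ t, 1 ≤ t → t < m → a (t + 1) * b t + 1 ≤ a t * b (t + 1))
    (i : ℕ) (hi1 : 1 ≤ i) (him : i < m)
    (α β p q : ℕ)
    (hp : p = α * a i + β * a (i + 1)) (hq : q = α * b i + β * b (i + 1)) :
    weightedOrd p q (∏ t ∈ Icc 1 m, (X 1 ^ a t + X 0 ^ b t) ^ A t)
        = p * (∑ t ∈ Icc 1 i, b t * A t) + q * (∑ t ∈ Icc (i + 1) m, a t * A t) ∧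
    p * (∑ t ∈ Icc 1 i, b t * A t) + q * (∑ t ∈ Icc (i + 1) m, a t * A t)
        = α * (a i * ∑ t ∈ Icc 1 i, b t * A t + b i * ∑ t ∈ Icc (i + 1) m, a t * A t)
          + β * (a (i + 1) * ∑ t ∈ Icc 1 (i + 1), b t * A t
            + b (i + 1) * ∑ t ∈ Icc (i + 2) m, a t * A t) := by
  have cross := cross_mul_le_of_succ (fun t h1 h2 ↦ (hpos t h1 h2).2)
    (fun t h1 h2 ↦ Nat.le_of_succ_le (hdet t h1 h2))
  have hleft : ∀ t ∈ Icc 1 i, min (q * a t) (p * b t) = p * b t := by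
    intro t ht
    rw [mem_Icc] at ht
    have h₁ := cross ht.1 ht.2 him.le
    have h₂ := cross ht.1 (ht.2.trans i.le_succ) him
    exact min_eq_right (by rw [hp, hq]; nlinarith)
  have hright : ∀ t ∈ Icc (i + 1) m, min (q * a t) (p * b t) = q * a t := by
    intro t ht
    rw [mem_Icc] at ht
    have h₁ := cross hi1 (i.le_succ.trans ht.1) ht.2
    have h₂ := cross (by omega) ht.1 ht.2
    exact min_eq_left (by rw [hp, hq]; nlinarith)
  refine ⟨?_, ?_⟩
  · rw [weightedOrd_prod_X_pow_add_X_pow_pow fun t ht ↦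
        (hpos t (mem_Icc.1 ht).1 (mem_Icc.1 ht).2).1,
      ← Ico_add_one_right_eq_Icc 1 m,
      ← sum_Ico_consecutive _ (by omega : 1 ≤ i + 1) (by omega : i + 1 ≤ m + 1),
      Ico_add_one_right_eq_Icc, Ico_add_one_right_eq_Icc, mul_sum, mul_sum]
    congr 1 <;> refine sum_congr rfl fun t ht ↦ ?_
    · rw [hleft t ht]; ring
    · rw [hright t ht]; ring
  · rw [sum_Icc_succ_top (by omega : 1 ≤ i + 1), Icc_eq_cons_Ioc (show i + 1 ≤ m from him),
      sum_cons, ← Icc_add_one_left_eq_Ioc, show i + 1 + 1 = i + 2 from rfl, hp, hq]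
    ring

/-- The support function of the Newton polygon of `f = ∏_t (y^{a_t}+x^{b_t})^{A_t}`
on the open cone spanned by two consecutive face vectors: for
`(p,q) = α(a_i,b_i) + β(a_{i+1},b_{i+1})` with `α,β ≥ 1`, the minimum of
`p*u + q*v` over the support of `f` equals `p·Σ_{t≤i} b_t A_t + q·Σ_{t>i} a_t A_t`,
which equals `α·m(P_i) + β·m(P_{i+1})`. -/
theorem stmt11 (m : ℕ) (hm : 1 ≤ m) (a b A : ℕ → ℕ)
    (hpos : ∀ t, 1 ≤ t → t ≤ m → 0 < a t ∧ 0 < b t)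
    (hdet : ∀ t, 1 ≤ t → t < m → a (t + 1) * b t + 1 ≤ a t * b (t + 1))
    (hA : ∀ t, 1 ≤ t → t ≤ m → 0 < A t)
    (i : ℕ) (hi1 : 1 ≤ i) (him : i < m)
    (α β p q : ℕ) (hα : 0 < α) (hβ : 0 < β)
    (hp : p = α * a i + β * a (i + 1)) (hq : q = α * b i + β * b (i + 1)) :
    weightedOrd p q (∏ t ∈ Icc 1 m, (X 1 ^ a t + X 0 ^ b t) ^ A t)
        = p * (∑ t ∈ Icc 1 i, b t * A t) + q * (∑ t ∈ Icc (i + 1) m, a t * A t) ∧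
    p * (∑ t ∈ Icc 1 i, b t * A t) + q * (∑ t ∈ Icc (i + 1) m, a t * A t)
        = α * (a i * ∑ t ∈ Icc 1 i, b t * A t + b i * ∑ t ∈ Icc (i + 1) m, a t * A t)
          + β * (a (i + 1) * ∑ t ∈ Icc 1 (i + 1), b t * A t
            + b (i + 1) * ∑ t ∈ Icc (i + 2) m, a t * A t) :=
  stmt11_general m a b A hpos hdet i hi1 him α β p q hp hq
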